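/- arXiv:1506.08895 — 4 statements merged into one kernel-verified Lean document; each statement's English description precedes it below -/
import Mathlib

section
/- Let X, Y be independent exponential random variables with rates γ₁ ≠ γ₂, both positive, and let 0 < η < η₁ with η₁ - η ≥ η. Then P(X > η ∧ Y > η ∧ X + Y > η₁) = (γ₁·e^{-γ₂·η₁}/(γ₁ - γ₂))·(exp(-(γ₁-γ₂)η) - exp(-(γ₁-γ₂)(η₁-η))) + exp(-η₁γ₁ - η(γ₂ - γ₁)). -/
open MeasureTheory

lemma expInt (a b : ℝ) (hb : 0 < b) :
    ∫ y in Set.Ioi a, Real.exp (-(b * y)) = Real.exp (-(b * a)) / b := by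
  have hderiv : ∀ x ∈ Set.Ioi a,
      HasDerivAt (fun y => -Real.exp (-(b * y)) / b) (Real.exp (-(b * x))) x := by
    intro x _
    have h1 : HasDerivAt (fun y : ℝ => -(b * y)) (-b) x := by
      exact ((hasDerivAt_id x).const_mul b).neg.congr_deriv (by ring)
    have h2 := h1.exp
    have h3 := (h2.neg.div_const b)
    exact h3.congr_deriv (by rw [mul_neg, neg_neg, mul_div_assoc, div_self hb.ne', mul_one])
  have hint : IntegrableOn (fun x => Real.exp (-(b * x))) (Set.Ioi a) := by
    simpa using exp_neg_integrableOn_Ioi a hb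
  have hcont : ContinuousOn (fun y => -Real.exp (-(b * y)) / b) (Set.Ici a) := by
    fun_prop
  have htend : Filter.Tendsto (fun y => -Real.exp (-(b * y)) / b) Filter.atTop (nhds 0) := by
    have hb' : Filter.Tendsto (fun y : ℝ => b * y) Filter.atTop Filter.atTop :=
      Filter.Tendsto.const_mul_atTop hb Filter.tendsto_id
    have := (Real.tendsto_exp_neg_atTop_nhds_zero.comp hb').neg.div_const b
    simpa [Function.comp] using this
  have := MeasureTheory.integral_Ioi_of_hasDerivAt_of_tendsto
    (f := fun y => -Real.exp (-(b * y)) / b) (hcont a Set.self_mem_Ici) hderiv hint htend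
  rw [this]
  field_simp
  ring

lemma expIntC (a b c : ℝ) (hc : c ≠ 0) :
    ∫ x in a..b, Real.exp (-(c * x)) = (Real.exp (-(c * a)) - Real.exp (-(c * b))) / c := by
  have hderiv : ∀ x ∈ Set.uIcc a b,
      HasDerivAt (fun y => -Real.exp (-(c * y)) / c) (Real.exp (-(c * x))) x := by
    intro x _
    have h1 : HasDerivAt (fun y : ℝ => -(c * y)) (-c) x := by
      exact ((hasDerivAt_id x).const_mul c).neg.congr_deriv (by ring)
    have h3 := (h1.exp.neg.div_const c)
    exact h3.congr_deriv (by rw [mul_neg, neg_neg, mul_div_assoc, div_self hc, mul_one])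
  rw [intervalIntegral.integral_eq_sub_of_hasDerivAt hderiv (Continuous.intervalIntegrable (by fun_prop) a b)]
  field_simp
  ring

set_option maxHeartbeats 1000000 in
theorem stmt2 (γ₁ γ₂ η η₁ : ℝ) (h1 : 0 < γ₁) (h2 : 0 < γ₂) (hne : γ₁ ≠ γ₂)
    (hη : 0 < η) (hηη₁ : η < η₁) (hmid : η ≤ η₁ - η) :
    (∫ x in Set.Ioi η, ∫ y in Set.Ioi (max η (η₁ - x)),
        (γ₁ * Real.exp (-(γ₁ * x))) * (γ₂ * Real.exp (-(γ₂ * y))))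
      = (γ₁ * Real.exp (-(γ₂ * η₁)) / (γ₁ - γ₂)) *
          (Real.exp (-((γ₁ - γ₂) * η)) - Real.exp (-((γ₁ - γ₂) * (η₁ - η))))
        + Real.exp (-(η₁ * γ₁) - η * (γ₂ - γ₁)) := by
  set m := η₁ - η with hm
  have hcne : γ₁ - γ₂ ≠ 0 := sub_ne_zero.mpr hne
  have hinner : ∀ x : ℝ, (∫ y in Set.Ioi (max η (η₁ - x)),
      (γ₁ * Real.exp (-(γ₁ * x))) * (γ₂ * Real.exp (-(γ₂ * y))))
      = γ₁ * Real.exp (-(γ₁ * x)) * Real.exp (-(γ₂ * max η (η₁ - x))) := by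
    intro x
    rw [MeasureTheory.integral_const_mul]
    have : (∫ y in Set.Ioi (max η (η₁ - x)), γ₂ * Real.exp (-(γ₂ * y)))
        = Real.exp (-(γ₂ * max η (η₁ - x))) := by
      rw [MeasureTheory.integral_const_mul, expInt _ _ h2]
      field_simp
    rw [this]
  simp only [hinner]
  -- define g
  set g : ℝ → ℝ := fun x => γ₁ * Real.exp (-(γ₁ * x)) * Real.exp (-(γ₂ * max η (η₁ - x))) with hg
  have hsplit : Set.Ioi η = Set.Ioc η m ∪ Set.Ioi m := (Set.Ioc_union_Ioi_eq_Ioi hmid).symm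
  have hint1 : IntegrableOn g (Set.Ioc η m) := by
    apply Continuous.integrableOn_Ioc
    fun_prop
  have hint2 : IntegrableOn g (Set.Ioi m) := by
    have hbase : IntegrableOn (fun x => (γ₁ * Real.exp (-(γ₂ * η))) * Real.exp (-(γ₁ * x)))
        (Set.Ioi m) := by
      have := (exp_neg_integrableOn_Ioi m h1).const_mul (γ₁ * Real.exp (-(γ₂ * η)))
      simpa [neg_mul, IntegrableOn] using this
    have heq : Set.EqOn (fun x => (γ₁ * Real.exp (-(γ₂ * η))) * Real.exp (-(γ₁ * x))) g
        (Set.Ioi m) := by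
      intro x hx
      have hmax : max η (η₁ - x) = η := max_eq_left (by simp [Set.mem_Ioi, hm] at hx ⊢; linarith)
      simp only [hg, hmax]; ring
    exact hbase.congr_fun heq measurableSet_Ioi
  have := MeasureTheory.setIntegral_union (Set.Ioc_disjoint_Ioi le_rfl)
      measurableSet_Ioi hint1 hint2 (f := g) (μ := volume)
  rw [hsplit, this]
  have hI1 : (∫ x in Set.Ioc η m, g x)
      = γ₁ * Real.exp (-(γ₂ * η₁)) / (γ₁ - γ₂) *
        (Real.exp (-((γ₁ - γ₂) * η)) - Real.exp (-((γ₁ - γ₂) * m))) := by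
    have hcongr : ∀ x ∈ Set.Ioc η m,
        g x = (γ₁ * Real.exp (-(γ₂ * η₁))) * Real.exp (-((γ₁ - γ₂) * x)) := by
      intro x hx
      have hx1 : x ≤ m := hx.2
      have hmax : max η (η₁ - x) = η₁ - x := max_eq_right (by simp [hm] at hx1 ⊢; linarith)
      rw [hg]
      simp only [hmax]
      rw [mul_assoc, mul_assoc, ← Real.exp_add, ← Real.exp_add]
      ring_nf
    rw [MeasureTheory.setIntegral_congr_fun measurableSet_Ioc hcongr,
        MeasureTheory.integral_const_mul, ← intervalIntegral.integral_of_le hmid,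
        expIntC _ _ _ hcne]
    ring
  have hI2 : (∫ x in Set.Ioi m, g x) = Real.exp (-(η₁ * γ₁) - η * (γ₂ - γ₁)) := by
    have hcongr : ∀ x ∈ Set.Ioi m,
        g x = (γ₁ * Real.exp (-(γ₂ * η))) * Real.exp (-(γ₁ * x)) := by
      intro x hx
      have hmax : max η (η₁ - x) = η := max_eq_left (by simp [Set.mem_Ioi, hm] at hx ⊢; linarith)
      rw [hg]; simp only [hmax]; ring
    rw [MeasureTheory.setIntegral_congr_fun measurableSet_Ioi hcongr,
        MeasureTheory.integral_const_mul, expInt _ _ h1]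
    rw [div_eq_mul_inv]
    have h₁ : γ₁ * Real.exp (-(γ₂ * η)) * (Real.exp (-(γ₁ * m)) * γ₁⁻¹)
        = Real.exp (-(γ₂ * η)) * Real.exp (-(γ₁ * m)) := by
      field_simp
    rw [h₁, ← Real.exp_add]
    congr 1
    rw [hm]; ring
  rw [hI1, hI2]
end

section
/- Let T₁, f_rd, g_rd, f_sd, g_sd > 0 with g_sd < f_sd + T₁, T₁ + f_rd - β(T₁ + g_rd) > 0 for all β ∈ [0,1], and suppose f_rd - g_rd ≤ g_sd·(T₁ + f_rd)/(T₁ + f_sd). Define μ₁(β) = (1-β)(f_sd + T₁) + β·g_sd and μ_u(β) = f_rd·μ₁(β)/((1-β)T₁ + f_rd - β·g_rd). Then μ_u is monotonically nondecreasing on [0,1]. -/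
theorem stmt5 (T₁ f_rd g_rd f_sd g_sd : ℝ)
    (hT : 0 < T₁) (hf : 0 < f_rd) (hg : 0 < g_rd)
    (hfsd : 0 < f_sd) (hgsd : 0 < g_sd) (hlt : g_sd < f_sd + T₁)
    (hden : ∀ β ∈ Set.Icc (0:ℝ) 1, 0 < T₁ + f_rd - β * (T₁ + g_rd))
    (hcond : f_rd - g_rd ≤ g_sd * (T₁ + f_rd) / (T₁ + f_sd)) :
    MonotoneOn
      (fun β => f_rd * ((1 - β) * (f_sd + T₁) + β * g_sd) /
        ((1 - β) * T₁ + f_rd - β * g_rd))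
      (Set.Icc (0:ℝ) 1) := by
  have hkey : (f_rd - g_rd) * (T₁ + f_sd) ≤ g_sd * (T₁ + f_rd) := by
    have h0 : (0:ℝ) < T₁ + f_sd := by linarith
    exact (le_div_iff₀ h0).mp hcond
  intro x hx y hy hxy
  have hdx := hden x hx
  have hdy := hden y hy
  have hdx' : 0 < (1 - x) * T₁ + f_rd - x * g_rd := by ring_nf; ring_nf at hdx; linarith
  have hdy' : 0 < (1 - y) * T₁ + f_rd - y * g_rd := by ring_nf; ring_nf at hdy; linarith
  simp only
  rw [div_le_div_iff₀ hdx' hdy']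
  have h1 : 0 ≤ f_rd * (y - x) * (g_sd * (T₁ + f_rd) - (f_rd - g_rd) * (T₁ + f_sd)) := by
    apply mul_nonneg (mul_nonneg hf.le (by linarith)) (by linarith)
  nlinarith [h1]
end

section
/- Under the hypotheses of Lemma 1 (in particular f_rd - g_rd ≤ g_sd·(T₁ + f_rd)/(T₁ + f_sd), with μ₁(0) > μ_u(0), μ₁ strictly decreasing, μ_u nondecreasing, all denominators positive), the value β* = T₁/(T₁ + g_rd) lies in (0,1), satisfies μ₁(β*) = μ_u(β*), and maximizes min{μ₁(β), μ_u(β)} over β ∈ [0,1], with optimal value λ* = (1 - T₁/(T₁+g_rd))·(f_sd + T₁) + (T₁/(T₁+g_rd))·g_sd. -/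
/-- SBC source service rate. -/
noncomputable def mu1SBC (f_sd T₁ g_sd : ℝ) (β : ℝ) : ℝ :=
  (1 - β) * (f_sd + T₁) + β * g_sd

/-- SBC relay-stability bound. -/
noncomputable def muuSBC (f_sd T₁ g_sd f_rd g_rd : ℝ) (β : ℝ) : ℝ :=
  f_rd * mu1SBC f_sd T₁ g_sd β / ((1 - β) * T₁ + f_rd - β * g_rd)

theorem stmt6 (f_sd T₁ g_sd f_rd g_rd : ℝ)
    (hgsd : 0 < g_sd) (hgf : g_sd < f_sd) (hfsd : f_sd < 1)
    (hgrd : 0 < g_rd) (hgrf : g_rd ≤ f_rd) (hfrd : f_rd < 1)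
    (hT : 0 < T₁) (hT1 : T₁ < 1)
    (hden : ∀ β ∈ Set.Icc (0:ℝ) 1, 0 < (1 - β) * T₁ + f_rd - β * g_rd)
    (hcond : f_rd - g_rd ≤ g_sd * (T₁ + f_rd) / (T₁ + f_sd))
    (hinit : muuSBC f_sd T₁ g_sd f_rd g_rd 0 < mu1SBC f_sd T₁ g_sd 0) :
    T₁ / (T₁ + g_rd) ∈ Set.Ioo (0:ℝ) 1 ∧
    mu1SBC f_sd T₁ g_sd (T₁ / (T₁ + g_rd))
      = muuSBC f_sd T₁ g_sd f_rd g_rd (T₁ / (T₁ + g_rd)) ∧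
    (∀ β ∈ Set.Icc (0:ℝ) 1,
      min (mu1SBC f_sd T₁ g_sd β) (muuSBC f_sd T₁ g_sd f_rd g_rd β) ≤
        min (mu1SBC f_sd T₁ g_sd (T₁ / (T₁ + g_rd)))
          (muuSBC f_sd T₁ g_sd f_rd g_rd (T₁ / (T₁ + g_rd)))) ∧
    min (mu1SBC f_sd T₁ g_sd (T₁ / (T₁ + g_rd)))
        (muuSBC f_sd T₁ g_sd f_rd g_rd (T₁ / (T₁ + g_rd)))
      = (1 - T₁ / (T₁ + g_rd)) * (f_sd + T₁) + (T₁ / (T₁ + g_rd)) * g_sd := by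
  have hs : (0:ℝ) < T₁ + g_rd := by linarith
  have hfrd0 : 0 < f_rd := lt_of_lt_of_le hgrd hgrf
  have hDstar : (1 - T₁ / (T₁ + g_rd)) * T₁ + f_rd - (T₁ / (T₁ + g_rd)) * g_rd = f_rd := by
    field_simp
    ring
  have heq : mu1SBC f_sd T₁ g_sd (T₁ / (T₁ + g_rd))
      = muuSBC f_sd T₁ g_sd f_rd g_rd (T₁ / (T₁ + g_rd)) := by
    unfold muuSBC
    rw [hDstar, mul_div_cancel_left₀ _ (ne_of_gt hfrd0)]
  have hkey : (f_rd - g_rd) * (T₁ + f_sd) ≤ g_sd * (T₁ + f_rd) := by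
    have h1 : (0:ℝ) < T₁ + f_sd := by linarith
    calc (f_rd - g_rd) * (T₁ + f_sd) ≤ g_sd * (T₁ + f_rd) / (T₁ + f_sd) * (T₁ + f_sd) :=
          by exact mul_le_mul_of_nonneg_right hcond (le_of_lt h1)
      _ = g_sd * (T₁ + f_rd) := by field_simp
  refine ⟨⟨by positivity, by rw [div_lt_one hs]; linarith⟩, heq, ?_, ?_⟩
  · intro β hβ
    rw [← heq, min_self]
    have hD : 0 < (1 - β) * T₁ + f_rd - β * g_rd := hden β hβ
    rcases le_total β (T₁ / (T₁ + g_rd)) with h | h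
    · refine le_trans (min_le_right _ _) ?_
      have hrem : β * (T₁ + g_rd) ≤ T₁ := (le_div_iff₀ hs).mp h
      have hlam : mu1SBC f_sd T₁ g_sd (T₁ / (T₁ + g_rd))
          = (g_rd * (f_sd + T₁) + T₁ * g_sd) / (T₁ + g_rd) := by
        unfold mu1SBC; field_simp; ring
      rw [hlam]
      unfold muuSBC mu1SBC
      rw [div_le_div_iff₀ hD hs]
      nlinarith [mul_nonneg (by linarith : (0:ℝ) ≤ g_sd * (T₁ + f_rd) - (f_rd - g_rd) * (T₁ + f_sd))
        (by linarith : (0:ℝ) ≤ T₁ - β * (T₁ + g_rd))]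
    · refine le_trans (min_le_left _ _) ?_
      have hrem : T₁ ≤ β * (T₁ + g_rd) := (div_le_iff₀ hs).mp h
      unfold mu1SBC
      have hdiv : T₁ / (T₁ + g_rd) * (T₁ + g_rd) = T₁ := by field_simp
      nlinarith [mul_nonneg (by linarith : (0:ℝ) ≤ f_sd + T₁ - g_sd)
        (by linarith : (0:ℝ) ≤ β * (T₁ + g_rd) - T₁), hs.le,
        mul_pos hs hs]
  · rw [← heq, min_self]
    rfl
end

section
/- If the condition f_rd - g_rd ≤ g_sd·(T₁+f_rd)/(T₁+f_sd) holds (so the SBC single-source optimum is attained at β* = T₁/(T₁+g_rd)) and also f_rd - g_rd ≤ (T₁+g_rd)²(f_sd+T₁)/(T₁(f_sd+T₁-g_sd)) - (T₁+2g_rd) holds (so the DBC single-source optimum is attained at α* = T₁/(T₁+g_rd)), then the SBC and DBC schemes achieve the same maximum stable throughput λ* = (1 - T₁/(T₁+g_rd))(f_sd+T₁) + (T₁/(T₁+g_rd))·g_sd. -/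
/-- Source service rate (common to SBC and DBC). -/
noncomputable def mu1 (f_sd T₁ g_sd : ℝ) (β : ℝ) : ℝ :=
  (1 - β) * (f_sd + T₁) + β * g_sd

/-- SBC relay-stability bound. -/
noncomputable def muuS (f_sd T₁ g_sd f_rd g_rd : ℝ) (β : ℝ) : ℝ :=
  f_rd * mu1 f_sd T₁ g_sd β / ((1 - β) * T₁ + f_rd - β * g_rd)

/-- DBC relay-stability bound. -/
noncomputable def muuD (f_sd T₁ g_sd f_rd g_rd : ℝ) (α : ℝ) : ℝ :=
  α * f_rd * mu1 f_sd T₁ g_sd α / ((1 - α) * T₁ + α * (f_rd - g_rd))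

set_option maxHeartbeats 1000000 in
theorem stmt11 (f_sd T₁ g_sd f_rd g_rd : ℝ)
    (hgsd : 0 < g_sd) (hgf : g_sd < f_sd) (hfsd : f_sd < 1)
    (hgrd : 0 < g_rd) (hgrf : g_rd ≤ f_rd) (hfrd : f_rd < 1)
    (hT : 0 < T₁) (hT1 : T₁ < 1)
    (hdenS : ∀ β ∈ Set.Icc (0:ℝ) 1, 0 < (1 - β) * T₁ + f_rd - β * g_rd)
    (hdenD : ∀ α ∈ Set.Icc (0:ℝ) 1, 0 < (1 - α) * T₁ + α * (f_rd - g_rd))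
    (hcondS : f_rd - g_rd ≤ g_sd * (T₁ + f_rd) / (T₁ + f_sd))
    (hcondD : f_rd - g_rd ≤
      (T₁ + g_rd) ^ 2 * (f_sd + T₁) / (T₁ * (f_sd + T₁ - g_sd)) - (T₁ + 2 * g_rd)) :
    IsGreatest
      ((fun β => min (mu1 f_sd T₁ g_sd β) (muuS f_sd T₁ g_sd f_rd g_rd β)) ''
        Set.Icc (0:ℝ) 1)
      ((1 - T₁ / (T₁ + g_rd)) * (f_sd + T₁) + (T₁ / (T₁ + g_rd)) * g_sd) ∧
    IsGreatest
      ((fun α => min (mu1 f_sd T₁ g_sd α) (muuD f_sd T₁ g_sd f_rd g_rd α)) ''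
        Set.Icc (0:ℝ) 1)
      ((1 - T₁ / (T₁ + g_rd)) * (f_sd + T₁) + (T₁ / (T₁ + g_rd)) * g_sd) := by
  have hS : 0 < T₁ + g_rd := by linarith
  have hB : 0 < f_sd + T₁ - g_sd := by linarith
  have hfrd0 : 0 < f_rd := lt_of_lt_of_le hgrd hgrf
  set β : ℝ := T₁ / (T₁ + g_rd) with hβdef
  have hβ0 : 0 < β := div_pos hT hS
  have hβ1 : β < 1 := (div_lt_one hS).mpr (by linarith)
  have hβS : β * (T₁ + g_rd) = T₁ := div_mul_cancel₀ _ hS.ne'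
  have hlam : (1 - T₁ / (T₁ + g_rd)) * (f_sd + T₁) + (T₁ / (T₁ + g_rd)) * g_sd
      = mu1 f_sd T₁ g_sd β := rfl
  rw [hlam]
  have h1β : (1 - β) * T₁ = β * g_rd := by linear_combination - hβS
  have hβmem : β ∈ Set.Icc (0:ℝ) 1 := ⟨hβ0.le, hβ1.le⟩
  -- cleared-denominator versions of the conditions
  have hS' : (f_rd - g_rd) * (T₁ + f_sd) ≤ g_sd * (T₁ + f_rd) := by
    rw [le_div_iff₀ (by linarith)] at hcondS; exact hcondS
  have hD' : (f_rd - g_rd + (T₁ + 2 * g_rd)) * (T₁ * (f_sd + T₁ - g_sd))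
      ≤ (T₁ + g_rd) ^ 2 * (f_sd + T₁) := by
    rw [le_sub_iff_add_le, le_div_iff₀ (mul_pos hT hB)] at hcondD; exact hcondD
  have key1 : 0 ≤ g_rd * (f_sd + T₁) + g_sd * T₁ - f_rd * (f_sd + T₁ - g_sd) := by
    nlinarith [hS']
  have key2 : 0 ≤ (T₁ + g_rd) ^ 2 * (f_sd + T₁)
      - (f_sd + T₁ - g_sd) * T₁ * (f_rd + T₁ + g_rd) := by nlinarith [hD']
  -- value of mu1 at β, scaled
  have hmuβ : mu1 f_sd T₁ g_sd β * (T₁ + g_rd) = g_rd * (f_sd + T₁) + g_sd * T₁ := by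
    unfold mu1; nlinarith [hβS]
  -- mu1 is decreasing
  have hmono : ∀ x ∈ Set.Icc (0:ℝ) 1, β ≤ x → mu1 f_sd T₁ g_sd x ≤ mu1 f_sd T₁ g_sd β := by
    intro x _ hx
    unfold mu1
    nlinarith [mul_nonneg (by linarith : (0:ℝ) ≤ x - β) (by linarith : (0:ℝ) ≤ f_sd + T₁ - g_sd)]
  clear_value β
  constructor
  · constructor
    · refine ⟨β, hβmem, ?_⟩
      have hDS : (1 - β) * T₁ + f_rd - β * g_rd = f_rd := by linear_combination h1β
      have : muuS f_sd T₁ g_sd f_rd g_rd β = mu1 f_sd T₁ g_sd β := by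
        unfold muuS; rw [hDS, mul_div_cancel_left₀ _ hfrd0.ne']
      simp [this]
    · rintro y ⟨x, hx, rfl⟩
      rcases le_or_gt x β with hxβ | hxβ
      · refine le_trans (min_le_right _ _) ?_
        have hu : 0 ≤ T₁ - x * (T₁ + g_rd) := by
          rw [hβdef] at hxβ
          have := (le_div_iff₀ hS).mp hxβ; linarith
        have hD := hdenS x hx
        unfold muuS
        rw [div_le_iff₀ hD]
        have hkey : f_rd * mu1 f_sd T₁ g_sd x * (T₁ + g_rd)
            ≤ (g_rd * (f_sd + T₁) + g_sd * T₁) * ((1 - x) * T₁ + f_rd - x * g_rd) := by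
          unfold mu1
          nlinarith [mul_nonneg hu key1]
        rw [← hmuβ] at hkey
        have h2 : f_rd * mu1 f_sd T₁ g_sd x * (T₁ + g_rd)
            ≤ mu1 f_sd T₁ g_sd β * ((1 - x) * T₁ + f_rd - x * g_rd) * (T₁ + g_rd) := by
          linarith [hkey]
        exact le_of_mul_le_mul_right h2 hS
      · exact le_trans (min_le_left _ _) (hmono x hx hxβ.le)
  · constructor
    · refine ⟨β, hβmem, ?_⟩
      have hEβ : (1 - β) * T₁ + β * (f_rd - g_rd) = β * f_rd := by linear_combination h1β
      have : muuD f_sd T₁ g_sd f_rd g_rd β = mu1 f_sd T₁ g_sd β := by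
        unfold muuD
        rw [hEβ, mul_div_cancel_left₀ _ (mul_pos hβ0 hfrd0).ne']
      simp [this]
    · rintro y ⟨x, hx, rfl⟩
      rcases le_or_gt x β with hxβ | hxβ
      · refine le_trans (min_le_right _ _) ?_
        have hu : 0 ≤ T₁ - x * (T₁ + g_rd) := by
          rw [hβdef] at hxβ
          have := (le_div_iff₀ hS).mp hxβ; linarith
        have hE := hdenD x hx
        unfold muuD
        rw [div_le_iff₀ hE]
        have hkey : x * f_rd * mu1 f_sd T₁ g_sd x * ((T₁ + g_rd) * (T₁ + g_rd))
            ≤ (g_rd * (f_sd + T₁) + g_sd * T₁) * ((1 - x) * T₁ + x * (f_rd - g_rd))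
              * (T₁ + g_rd) := by
          unfold mu1
          nlinarith [mul_nonneg hu key2,
            mul_nonneg (mul_nonneg hfrd0.le hB.le) (mul_nonneg hu hu)]
        rw [← hmuβ] at hkey
        have h2 : x * f_rd * mu1 f_sd T₁ g_sd x * ((T₁ + g_rd) * (T₁ + g_rd))
            ≤ mu1 f_sd T₁ g_sd β * ((1 - x) * T₁ + x * (f_rd - g_rd))
              * ((T₁ + g_rd) * (T₁ + g_rd)) := by
          linarith [hkey]
        exact le_of_mul_le_mul_right h2 (mul_pos hS hS)
      · exact le_trans (min_le_left _ _) (hmono x hx hxβ.le)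
end
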